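/- Fix λ > 0 and a > 1. For E ∈ (0,1), let s(E) be the unique real number s > λ satisfying (s − λ)·log(s/λ) = a·log(1/E), and set η(E) := ⌊s(E)⌋. Then liminf_{E → 0⁺} [ η(E)^{η(E)} · E^{a} ] / [ η(E)^{λ−1} · λ^{η(E)−λ} ] ≥ min{λ, 1} / e. -/

import Mathlib

open Filter Real Set Topology

/-!
Write `n = ⌊s⌋`. Substituting `a log E = -(s - λ) log (s/λ)` turns the quotient into
`exp ((n + 1 - s) log n - (s - λ) log (s/n) + (s - n) log λ)`. Since `log (s/n) ≤ (s - n)/n` and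
`s - λ < n + 1`, the middle term is at most `1 + 1/n`, the first term is nonnegative and the last is
at least `log (min λ 1)`; as `E → 0⁺` we have `n → ∞`, which gives the bound `min λ 1 / e`.
The quotient is unbounded (the first term is about `log n` when `s` is just above an integer), so the
liminf has to be shown finite: along `s = m + 1 - 1/(m + 1)` the first term stays below `1`.
-/

section SubMulLogDiv

variable {lam : ℝ}

theorem strictMonoOn_sub_mul_log_div (hlam : 0 < lam) :
    StrictMonoOn (fun x => (x - lam) * log (x / lam)) (Ici lam) := by
  intro x hx y _ hxy
  have hx : lam ≤ x := hx
  have hlog_x : 0 ≤ log (x / lam) := log_nonneg ((one_le_div hlam).2 hx)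
  have hlog : log (x / lam) < log (y / lam) :=
    log_lt_log (div_pos (hlam.trans_le hx) hlam) (div_lt_div_of_pos_right hxy hlam)
  calc (x - lam) * log (x / lam) ≤ (x - lam) * log (y / lam) := by gcongr
    _ < (y - lam) * log (y / lam) := by gcongr; linarith

theorem tendsto_sub_mul_log_div_atTop (hlam : 0 < lam) :
    Tendsto (fun x => (x - lam) * log (x / lam)) atTop atTop :=
  (tendsto_atTop_add_const_right _ (-lam) tendsto_id).atTop_mul_atTop₀
    (tendsto_log_atTop.comp (tendsto_id.atTop_div_const hlam))

theorem tendsto_atTop_of_sub_mul_log_div_eq {α : Type*} {l : Filter α} {s h : α → ℝ}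
    (hlam : 0 < lam) (hs : ∀ᶠ x in l, lam < s x ∧ (s x - lam) * log (s x / lam) = h x)
    (hh : Tendsto h l atTop) : Tendsto s l atTop := by
  refine tendsto_atTop.2 fun M => ?_
  filter_upwards [hs, hh.eventually_gt_atTop ((max M lam - lam) * log (max M lam / lam))]
    with x ⟨hsx, heq⟩ hgt
  rw [← heq] at hgt
  exact (le_max_left M lam).trans
    ((strictMonoOn_sub_mul_log_div hlam).lt_iff_lt (le_max_right M lam) hsx.le |>.1 hgt).le

end SubMulLogDiv

section Quotient

variable {lam a n s E : ℝ}

theorem quotient_eq_exp (hlam : 0 < lam) (hn : 0 < n) (hE : 0 < E) (hs : lam < s)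
    (heq : (s - lam) * log (s / lam) = a * log (1 / E)) :
    n ^ n * E ^ a / (n ^ (lam - 1) * lam ^ (n - lam)) =
      exp ((n + 1 - s) * log n - (s - lam) * log (s / n) + (s - n) * log lam) := by
  have hs0 : 0 < s := hlam.trans hs
  rw [rpow_def_of_pos hn, rpow_def_of_pos hE, rpow_def_of_pos hn, rpow_def_of_pos hlam,
    ← exp_add, ← exp_add, ← exp_sub]
  rw [log_div hs0.ne' hlam.ne', one_div, log_inv] at heq
  rw [log_div hs0.ne' hn.ne']
  congr 1
  linear_combination heq

theorem log_min_one_le_mul_log {x t : ℝ} (hx : 0 < x) (ht0 : 0 ≤ t) (ht1 : t ≤ 1) :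
    log (min x 1) ≤ t * log x := by
  rcases le_total x 1 with h | h
  · rw [min_eq_left h]
    nlinarith [log_nonpos hx.le h]
  · rw [min_eq_right h, log_one]
    exact mul_nonneg ht0 (log_nonneg h)

theorem log_min_one_sub_le_exponent (hlam : 0 < lam) (hn : 1 ≤ n) (hns : n ≤ s)
    (hsn : s < n + 1) :
    log (min lam 1) - 1 - 1 / n ≤
      (n + 1 - s) * log n - (s - lam) * log (s / n) + (s - n) * log lam := by
  have hn0 : 0 < n := by linarith
  have hfirst : 0 ≤ (n + 1 - s) * log n := mul_nonneg (by linarith) (log_nonneg hn)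
  have hmiddle : (s - lam) * log (s / n) ≤ 1 + 1 / n :=
    calc (s - lam) * log (s / n) ≤ (n + 1) * (s / n - 1) :=
          mul_le_mul (by linarith) (log_le_sub_one_of_pos (div_pos (by linarith) hn0))
            (log_nonneg ((one_le_div hn0).2 hns)) (by linarith)
      _ ≤ (n + 1) * (1 / n) := by
          gcongr
          rw [div_sub_one hn0.ne']
          exact div_le_div_of_nonneg_right (by linarith) hn0.le
      _ = 1 + 1 / n := by field_simp
  have hlast := log_min_one_le_mul_log hlam (sub_nonneg.2 hns) (by linarith : s - n ≤ 1)
  linarith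

theorem exponent_le (hn : 0 < n) (hns : n ≤ s) (hsn : s ≤ n + 1) (hs : lam ≤ s) :
    (n + 1 - s) * log n - (s - lam) * log (s / n) + (s - n) * log lam ≤
      (n + 1 - s) * log n + |log lam| := by
  have hmiddle : 0 ≤ (s - lam) * log (s / n) :=
    mul_nonneg (sub_nonneg.2 hs) (log_nonneg ((one_le_div hn).2 hns))
  have hlast : (s - n) * log lam ≤ |log lam| :=
    calc (s - n) * log lam ≤ (s - n) * |log lam| :=
          mul_le_mul_of_nonneg_left (le_abs_self _) (by linarith)
      _ ≤ 1 * |log lam| := by gcongr; linarith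
      _ = |log lam| := one_mul _
  linarith

theorem min_one_mul_exp_le_quotient_floor (hlam : 0 < lam) (hE : 0 < E) (hs : lam < s)
    (heq : (s - lam) * log (s / lam) = a * log (1 / E)) (hn : 1 ≤ (⌊s⌋ : ℝ)) :
    min lam 1 * exp (-1 - 1 / ⌊s⌋) ≤
      (⌊s⌋ : ℝ) ^ (⌊s⌋ : ℝ) * E ^ a / ((⌊s⌋ : ℝ) ^ (lam - 1) * lam ^ ((⌊s⌋ : ℝ) - lam)) := by
  rw [quotient_eq_exp hlam (by linarith) hE hs heq, ← exp_log (lt_min hlam one_pos), ← exp_add,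
    exp_le_exp]
  linarith [log_min_one_sub_le_exponent hlam hn (Int.floor_le s) (Int.lt_floor_add_one s)]

end Quotient

theorem frequently_quotient_floor_le {lam a : ℝ} (hlam : 0 < lam) (ha : 0 < a) (s : ℝ → ℝ)
    (hs : ∀ E ∈ Ioo (0 : ℝ) 1,
      lam < s E ∧ (s E - lam) * log (s E / lam) = a * log (1 / E)) :
    ∃ᶠ E in 𝓝[>] 0,
      (⌊s E⌋ : ℝ) ^ (⌊s E⌋ : ℝ) * E ^ a /
        ((⌊s E⌋ : ℝ) ^ (lam - 1) * lam ^ ((⌊s E⌋ : ℝ) - lam)) ≤ exp (1 + |log lam|) := by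
  set g : ℝ → ℝ := fun x => (x - lam) * log (x / lam)
  set t : ℕ → ℝ := fun m => m + 1 - 1 / (m + 1)
  have ht_bounds (m : ℕ) : (m : ℝ) ≤ t m ∧ t m < m + 1 := by
    have : 1 / ((m : ℝ) + 1) ≤ 1 := (div_le_one (by positivity)).2 (by simp)
    constructor <;> simp only [t] <;> linarith [show 0 < 1 / ((m : ℝ) + 1) by positivity]
  have ht_floor (m : ℕ) : ⌊t m⌋ = m := by
    rw [Int.floor_eq_iff]
    exact_mod_cast ht_bounds m
  have ht : Tendsto t atTop atTop :=
    tendsto_atTop_mono (fun m => (ht_bounds m).1) tendsto_natCast_atTop_atTop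
  have hgt : Tendsto (g ∘ t) atTop atTop := (tendsto_sub_mul_log_div_atTop hlam).comp ht
  set E : ℕ → ℝ := fun m => exp (-(g (t m) / a))
  have hE : Tendsto E atTop (𝓝[>] 0) :=
    tendsto_exp_atBot_nhdsGT.comp (tendsto_neg_atTop_atBot.comp (hgt.atTop_div_const ha))
  refine hE.frequently (Eventually.frequently ?_)
  filter_upwards [ht.eventually_gt_atTop lam, hgt.eventually_gt_atTop 0, eventually_ge_atTop 1]
    with m hlt hpos hm
  have hE1 : E m < 1 := exp_lt_one_iff.2 (neg_lt_zero.2 (div_pos hpos ha))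
  obtain ⟨hsl, heq⟩ := hs (E m) ⟨exp_pos _, hE1⟩
  have hlevel : a * log (1 / E m) = g (t m) := by
    simp only [E, one_div, log_inv, log_exp, neg_neg]
    field_simp
  have hst : s (E m) = t m :=
    (strictMonoOn_sub_mul_log_div hlam).injOn hsl.le hlt.le (heq.trans hlevel)
  have hm0 : (0 : ℝ) < m := by exact_mod_cast hm
  rw [hst, ht_floor, Int.cast_natCast,
    quotient_eq_exp hlam hm0 (exp_pos _) hlt (by rwa [hst] at heq), exp_le_exp]
  refine (exponent_le hm0 (ht_bounds m).1 (ht_bounds m).2.le hlt.le).trans ?_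
  have hfirst : (m + 1 - t m) * log m = log m / (m + 1) := by simp only [t]; ring
  have hlog : log m ≤ m + 1 := by linarith [log_le_sub_one_of_pos hm0]
  rw [hfirst, add_le_add_iff_right]
  exact (div_le_one (by positivity)).2 hlog

theorem floor_solution_power_liminf {lam a : ℝ} (hlam : 0 < lam) (ha : 1 < a)
    (s : ℝ → ℝ)
    (hs : ∀ E ∈ Set.Ioo (0 : ℝ) 1,
      lam < s E ∧ (s E - lam) * Real.log (s E / lam) = a * Real.log (1 / E)) :
    min lam 1 / Real.exp 1 ≤
      Filter.liminf
        (fun E : ℝ =>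
          ((⌊s E⌋ : ℝ) ^ ((⌊s E⌋ : ℝ)) * E ^ a) /
            ((⌊s E⌋ : ℝ) ^ (lam - 1) * lam ^ ((⌊s E⌋ : ℝ) - lam)))
        (nhdsWithin 0 (Set.Ioi 0)) := by
  have ha0 : 0 < a := by linarith
  have hsol : ∀ᶠ E in 𝓝[>] (0 : ℝ),
      0 < E ∧ lam < s E ∧ (s E - lam) * log (s E / lam) = a * log (1 / E) := by
    filter_upwards [Ioo_mem_nhdsGT one_pos] with E hE using ⟨hE.1, hs E hE⟩
  have hlevel : Tendsto (fun E => a * log (1 / E)) (𝓝[>] 0) atTop := by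
    simpa only [one_div, log_inv, Function.comp_def] using
      (tendsto_neg_atBot_atTop.comp tendsto_log_nhdsGT_zero).const_mul_atTop ha0
  have hs_top : Tendsto s (𝓝[>] 0) atTop :=
    tendsto_atTop_of_sub_mul_log_div_eq hlam (hsol.mono fun E h => h.2) hlevel
  have hfloor : Tendsto (fun E => (⌊s E⌋ : ℝ)) (𝓝[>] 0) atTop :=
    tendsto_atTop_mono (fun E => (Int.sub_one_lt_floor (s E)).le)
      (tendsto_atTop_add_const_right _ (-1) hs_top)
  have hlow : Tendsto (fun E => min lam 1 * exp (-1 - 1 / ⌊s E⌋)) (𝓝[>] 0)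
      (𝓝 (min lam 1 / exp 1)) := by
    convert ((tendsto_const_nhds.sub (tendsto_const_nhds.div_atTop hfloor)).rexp).const_mul
      (min lam 1) using 2
    rw [sub_zero, exp_neg, div_eq_mul_inv]
  calc min lam 1 / exp 1 = liminf (fun E => min lam 1 * exp (-1 - 1 / ⌊s E⌋)) (𝓝[>] 0) :=
        hlow.liminf_eq.symm
    _ ≤ _ := by
      refine liminf_le_liminf ?_ hlow.isBoundedUnder_ge
        (IsCoboundedUnder.of_frequently_le (frequently_quotient_floor_le hlam ha0 s hs))
      filter_upwards [hsol, hfloor.eventually_ge_atTop 1] with E ⟨hE, hsl, heq⟩ hn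
      exact min_one_mul_exp_le_quotient_floor hlam hE hsl heq hn
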